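/- Fix γ > 0 and define P_n(x) = U_n(x) + e^{−γ/2}·U_{n−1}(x) for n ≥ 1 and P_0 = 1, where U_n are Chebyshev polynomials of the second kind. Then P_n has exactly n real zeros, all lying in the open interval (−1, 1). -/

import Mathlib

noncomputable def chebUR : ℕ → ℝ → ℝ
  | 0, _ => 1
  | 1, x => 2 * x
  | (n + 2), x => 2 * x * chebUR (n + 1) x - chebUR n x

noncomputable def Pg (γ : ℝ) : ℕ → ℝ → ℝ
  | 0, _ => 1
  | (n + 1), x => chebUR (n + 1) x + Real.exp (-γ / 2) * chebUR n x

/-!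
Put `r = e^{-γ/2}`, so `0 < r < 1`, and `x = cos θ`. Then
`sin θ · P_{n+1}(cos θ) = sin ((n+2)θ) + r sin ((n+1)θ)`.
At `θ_j = (2j+1)π / (2(n+2))`, `0 ≤ j ≤ n+1`, the first term is `(-1)^j` while the second has
absolute value at most `r < 1`, so `P_{n+1}` changes sign between consecutive points `cos θ_j`
of `(-1, 1)`. The intermediate value theorem gives `n+1` distinct roots there, and since
`P_{n+1}` has degree `n+1` these are all of its roots.
-/

open Polynomial Polynomial.Chebyshev Real

theorem eval_U_natCast_add_two (n : ℕ) (x : ℝ) :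
    (U ℝ (n + 2 : ℕ)).eval x = 2 * x * (U ℝ (n + 1 : ℕ)).eval x - (U ℝ n).eval x := by
  push_cast
  simp [U_add_two]

theorem chebUR_eq_eval_U (n : ℕ) (x : ℝ) : chebUR n x = (U ℝ n).eval x := by
  induction n using Nat.twoStepInduction with
  | zero => simp [chebUR]
  | one => simp [chebUR]
  | more n ih ih' => rw [chebUR, ih, ih', eval_U_natCast_add_two]

/-- The paper's `P_{n+1}`, with `e^{-γ/2}` replaced by an arbitrary coefficient `r`. -/
noncomputable def perturbedU (r : ℝ) (n : ℕ) : ℝ[X] := U ℝ (n + 1 : ℕ) + C r * U ℝ n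

theorem Pg_succ_eq_eval_perturbedU (γ : ℝ) (n : ℕ) (x : ℝ) :
    Pg γ (n + 1) x = (perturbedU (exp (-γ / 2)) n).eval x := by
  simp [Pg, perturbedU, chebUR_eq_eval_U]

theorem natDegree_perturbedU (r : ℝ) (n : ℕ) : (perturbedU r n).natDegree = n + 1 := by
  rw [perturbedU, natDegree_add_eq_left_of_natDegree_lt] <;>
    simp only [natDegree_U_natCast]
  exact natDegree_C_mul_le r _ |>.trans_lt (by simp)

theorem perturbedU_ne_zero (r : ℝ) (n : ℕ) : perturbedU r n ≠ 0 := by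
  intro h
  simpa [h] using natDegree_perturbedU r n

namespace perturbedU

variable {r : ℝ} {n : ℕ}

theorem eval_cos_mul_sin (r : ℝ) (n : ℕ) (θ : ℝ) :
    (perturbedU r n).eval (cos θ) * sin θ = sin ((n + 2) * θ) + r * sin ((n + 1) * θ) := by
  have h₁ := U_real_cos θ (n + 1 : ℕ)
  have h₀ := U_real_cos θ n
  push_cast at h₁ h₀
  rw [add_assoc, one_add_one_eq_two] at h₁
  simp only [perturbedU, eval_add, eval_mul, eval_C]
  push_cast
  linear_combination h₁ + r * h₀

/-- The points `θ_j = (2j+1)π / (2(n+2))` at which `sin ((n + 2) θ) = (-1)^j`. -/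
noncomputable def node (n j : ℕ) : ℝ := (2 * j + 1) * π / (2 * (n + 2))

theorem node_pos (n j : ℕ) : 0 < node n j := by
  unfold node
  positivity

theorem node_lt_pi {n j : ℕ} (hj : j ≤ n + 1) : node n j < π := by
  have hj' : (j : ℝ) ≤ n + 1 := by exact_mod_cast hj
  rw [node, div_lt_iff₀ (by positivity)]
  nlinarith [pi_pos]

theorem node_strictMono (n : ℕ) : StrictMono (node n) := by
  intro i j hij
  have hij' : (i : ℝ) < j := by exact_mod_cast hij
  unfold node
  gcongr

theorem mul_node (n j : ℕ) : (n + 2) * node n j = j * π + π / 2 := by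
  rw [node]
  field_simp

theorem strictAntiOn_cos_node (n : ℕ) :
    StrictAntiOn (fun j ↦ cos (node n j)) (Set.Iic (n + 1)) :=
  fun i _ _ hj hij ↦
    cos_lt_cos_of_nonneg_of_le_pi (node_pos n i).le (node_lt_pi hj).le (node_strictMono n hij)

theorem cos_node_mem_Ioo {n j : ℕ} (hj : j ≤ n + 1) : cos (node n j) ∈ Set.Ioo (-1) 1 := by
  constructor
  · simpa using cos_lt_cos_of_nonneg_of_le_pi (node_pos n j).le le_rfl (node_lt_pi hj)
  · simpa using cos_lt_cos_of_nonneg_of_le_pi le_rfl (node_lt_pi hj).le (node_pos n j)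

theorem neg_one_pow_mul_eval_cos_node_pos (hr : |r| < 1) {j : ℕ} (hj : j ≤ n + 1) :
    0 < (-1) ^ j * (perturbedU r n).eval (cos (node n j)) := by
  set θ := node n j
  have hsin : 0 < sin θ := sin_pos_of_pos_of_lt_pi (node_pos n j) (node_lt_pi hj)
  have hsin₂ : sin ((n + 2) * θ) = (-1) ^ j := by
    rw [mul_node, sin_add_pi_div_two, cos_nat_mul_pi]
  have hcos₂ : cos ((n + 2) * θ) = 0 := by
    rw [mul_node, cos_add_pi_div_two, sin_nat_mul_pi, neg_zero]
  have hsin₁ : sin ((n + 1) * θ) = (-1) ^ j * cos θ := by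
    rw [show ((n : ℝ) + 1) * θ = (n + 2) * θ - θ by ring, sin_sub, hsin₂, hcos₂]
    ring
  have hrcos : |r * cos θ| < 1 :=
    (abs_mul r _).trans_lt
      (mul_le_of_le_one_right (abs_nonneg r) (abs_cos_le_one θ) |>.trans_lt hr)
  have key : (-1) ^ j * (perturbedU r n).eval (cos θ) * sin θ = 1 + r * cos θ := by
    have hsq : ((-1 : ℝ) ^ j) ^ 2 = 1 := by
      rw [← pow_mul, mul_comm, pow_mul, neg_one_sq, one_pow]
    rw [mul_assoc, eval_cos_mul_sin, hsin₂, hsin₁]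
    linear_combination (1 + r * cos θ) * hsq
  refine pos_of_mul_pos_left ?_ hsin.le
  rw [key]
  linarith [abs_lt.mp hrcos]

theorem exists_isRoot_mem_Ioo (hr : |r| < 1) {k : ℕ} (hk : k ≤ n) :
    ∃ x ∈ Set.Ioo (cos (node n (k + 1))) (cos (node n k)), (perturbedU r n).IsRoot x := by
  set f : ℝ → ℝ := fun x ↦ (-1) ^ k * (perturbedU r n).eval x
  have hleft : f (cos (node n (k + 1))) < 0 := by
    have := neg_one_pow_mul_eval_cos_node_pos hr (n := n) (j := k + 1) (by omega)
    simp only [f, pow_succ] at this ⊢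
    linarith
  have hright : 0 < f (cos (node n k)) := neg_one_pow_mul_eval_cos_node_pos hr (by omega)
  have hle : cos (node n (k + 1)) ≤ cos (node n k) :=
    (strictAntiOn_cos_node n (by grind) (by grind) k.lt_succ_self).le
  obtain ⟨x, hx, hfx⟩ :=
    intermediate_value_Ioo hle (by fun_prop : Continuous f).continuousOn ⟨hleft, hright⟩
  exact ⟨x, hx, (mul_eq_zero.mp hfx).resolve_left (by simp)⟩

theorem roots_toFinset_eq_image (hr : |r| < 1) :
    ∃ x : Fin (n + 1) → ℝ, StrictAnti x ∧ (∀ k, x k ∈ Set.Ioo (-1) 1) ∧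
      (perturbedU r n).roots.toFinset = Finset.univ.image x := by
  choose x hx hroot using fun k : Fin (n + 1) ↦ exists_isRoot_mem_Ioo hr (Nat.lt_succ_iff.mp k.2)
  have hx_anti : StrictAnti x := fun i j hij ↦
    ((hx j).2.trans_le (((strictAntiOn_cos_node n).le_iff_ge (by grind) (by grind)).mpr hij)).trans
      (hx i).1
  refine ⟨x, hx_anti, fun k ↦ ⟨?_, ?_⟩, ?_⟩
  · exact (cos_node_mem_Ioo (by omega)).1.trans (hx k).1
  · exact (hx k).2.trans (cos_node_mem_Ioo (by omega)).2
  refine (Finset.eq_of_subset_of_card_le (fun y hy ↦ ?_) ?_).symm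
  · obtain ⟨k, -, rfl⟩ := Finset.mem_image.mp hy
    simpa [perturbedU_ne_zero] using hroot k
  · calc (perturbedU r n).roots.toFinset.card ≤ Multiset.card (perturbedU r n).roots :=
          Multiset.toFinset_card_le _
      _ ≤ (perturbedU r n).natDegree := card_roots' _
      _ = (Finset.univ.image x).card := by
          rw [natDegree_perturbedU, Finset.card_image_of_injective _ hx_anti.injective,
            Finset.card_fin]

end perturbedU

theorem stmt5 (γ : ℝ) (hγ : 0 < γ) (n : ℕ) :
    ∃ S : Finset ℝ, S.card = n ∧ (∀ x ∈ S, x ∈ Set.Ioo (-1 : ℝ) 1) ∧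
      (∀ x : ℝ, Pg γ n x = 0 ↔ x ∈ S) := by
  cases n with
  | zero => exact ⟨∅, rfl, by simp, fun x ↦ by simp [Pg]⟩
  | succ n =>
    have hr : |exp (-γ / 2)| < 1 := by
      rw [abs_of_pos (exp_pos _), exp_lt_one_iff]
      linarith
    obtain ⟨x, hx_anti, hx_mem, hroots⟩ := perturbedU.roots_toFinset_eq_image (n := n) hr
    refine ⟨Finset.univ.image x, ?_, by simpa using hx_mem, fun y ↦ ?_⟩
    · rw [Finset.card_image_of_injective _ hx_anti.injective, Finset.card_fin]
    · rw [← hroots]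
      simp [Pg_succ_eq_eval_perturbedU, perturbedU_ne_zero]
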